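/- State-wise decomposition for relaxed majority voting: let Θ be a finite state set, R a finite voter set with net utilities u_r : Θ → [−1,1], δ ∈ (0,1), ε > 0, η ∈ (0,1], and let q be a positive integer with q ≥ 32·log(4/(η·δ))/ε². Then for every posterior p* ∈ Δ(Θ) there exists a probability distribution γ supported on the set 𝒬 of q-uniform posteriors with Σ_{p∈𝒬} γ_p·p = p* such that for EVERY state θ ∈ Θ it holds Σ_{p∈𝒬} γ_p · p_θ · W_δ(b^{p,ε}) ≥ (1−η) · p*_θ · W(b^{p*}), where b^{p,ε} ∈ {c0,c1}^R is the profile with b^{p,ε}_r = c0 iff Σ_{θ'} p_{θ'}·u_r(θ') ≥ −ε, and b^{p*} is the profile with b^{p*}_r = c0 iff Σ_{θ'} p*_{θ'}·u_r(θ') ≥ 0. -/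

import Mathlib

open Finset
open Finset

/-- Number of voters voting for candidate `c0` (encoded as `true`). -/
def votesFor {R : Type*} [Fintype R] (c : R → Bool) : ℕ :=
  (univ.filter (fun r => c r = true)).card

/-- The majority threshold `⌈|R|/2⌉`. -/
noncomputable def majThreshold (R : Type*) [Fintype R] : ℕ :=
  ⌈(Fintype.card R : ℝ) / 2⌉₊

/-- The majority-voting function `W`: value `1` iff at least `⌈|R|/2⌉` voters vote `c0`. -/
noncomputable def W {R : Type*} [Fintype R] (c : R → Bool) : ℝ :=
  if majThreshold R ≤ votesFor c then 1 else 0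

/-- The relaxed majority-voting function `W_δ`: value `1` iff at least
`⌈(1-δ)·⌈|R|/2⌉⌉` voters vote `c0`. -/
noncomputable def Wrel {R : Type*} [Fintype R] (δ : ℝ) (c : R → Bool) : ℝ :=
  if ⌈(1 - δ) * (majThreshold R : ℝ)⌉₊ ≤ votesFor c then 1 else 0


/-- The `ε`-persuasive best-response profile `b^{p,ε}` for majority voting: voter `r` votes
`c0` (`true`) iff `∑ θ, p θ · u r θ ≥ −ε`. (`b^{p}` is recovered with `ε = 0`.) -/
noncomputable def bestResp {Θ R : Type*} [Fintype Θ] (u : R → Θ → ℝ) (ε : ℝ)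
    (p : Θ → ℝ) : R → Bool :=
  fun r => if -ε ≤ ∑ θ, p θ * u r θ then true else false

set_option maxHeartbeats 1000000

open Finset
private lemma sum_prod_pow {Θ ι : Type*} [Fintype Θ] [Fintype ι] [DecidableEq ι] (G : Θ → ℝ) :
    ∑ ω : ι → Θ, ∏ j, G (ω j) = (∑ x, G x) ^ (Fintype.card ι) := by
  classical
  rw [← Fintype.piFinset_univ, Finset.sum_prod_piFinset]
  simp [Finset.prod_const]

private lemma sum_cond_prod {Θ ι : Type*} [Fintype Θ] [Fintype ι] [DecidableEq ι] [DecidableEq Θ]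
    (i : ι) (θ : Θ) (G : Θ → ℝ) :
    ∑ ω : ι → Θ, (if ω i = θ then (1:ℝ) else 0) * ∏ j, G (ω j)
      = G θ * (∑ x, G x) ^ (Fintype.card ι - 1) := by
  classical
  rw [← Equiv.sum_comp (Equiv.funSplitAt i Θ).symm
    (fun ω => (if ω i = θ then (1:ℝ) else 0) * ∏ j, G (ω j))]
  have h1 : ∀ (a : Θ) (g : {j // j ≠ i} → Θ), (Equiv.funSplitAt i Θ).symm (a, g) i = a := by
    intro a g; simp
  have h2 : ∀ (a : Θ) (g : {j // j ≠ i} → Θ) (j : {j // j ≠ i}),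
      (Equiv.funSplitAt i Θ).symm (a, g) j = g j := by
    intro a g j; simp [j.2]
  have h3 : ∀ (a : Θ) (g : {j // j ≠ i} → Θ),
      ∏ j, G ((Equiv.funSplitAt i Θ).symm (a, g) j) = G a * ∏ j : {j // j ≠ i}, G (g j) := by
    intro a g
    rw [← Finset.mul_prod_erase univ _ (mem_univ i), h1]
    congr 1
    rw [Finset.prod_subtype (univ.erase i) (p := fun j => j ≠ i) (by intro x; simp)
      (fun j => G ((Equiv.funSplitAt i Θ).symm (a, g) j))]
    exact Finset.prod_congr rfl fun j _ => by rw [h2]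
  rw [Fintype.sum_prod_type]
  calc ∑ a : Θ, ∑ g : {j // j ≠ i} → Θ,
        (if (Equiv.funSplitAt i Θ).symm (a, g) i = θ then (1:ℝ) else 0)
          * ∏ j, G ((Equiv.funSplitAt i Θ).symm (a, g) j)
      = ∑ a : Θ, (if a = θ then (1:ℝ) else 0) * G a * ∑ g : {j // j ≠ i} → Θ, ∏ j : {j // j ≠ i}, G (g j) := by
        refine Finset.sum_congr rfl fun a _ => ?_
        rw [Finset.mul_sum]
        refine Finset.sum_congr rfl fun g _ => ?_
        rw [h1, h3]; ring
    _ = G θ * (∑ x, G x) ^ (Fintype.card ι - 1) := by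
        rw [← Finset.sum_mul, sum_prod_pow]
        have : Fintype.card {j // j ≠ i} = Fintype.card ι - 1 := by
          rw [Fintype.card_subtype_compl (p := fun j => j = i)]  -- guess
          simp [Fintype.card_subtype_eq]
        rw [this]
        simp [Finset.sum_ite_eq']

private lemma mgf_step {Θ : Type*} [Fintype Θ] (p f : Θ → ℝ) (lam : ℝ)
    (hp0 : ∀ θ, 0 ≤ p θ) (hp1 : ∑ θ, p θ = 1)
    (hf : ∀ θ, |f θ| ≤ 1) (hμ : 0 ≤ ∑ θ, p θ * f θ)
    (hl0 : 0 ≤ lam) (hl1 : lam ≤ 1) :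
    ∑ θ, p θ * Real.exp (-(lam * f θ)) ≤ Real.exp (lam ^ 2) := by
  have pt : ∀ θ, Real.exp (-(lam * f θ)) ≤ 1 + (-(lam * f θ)) + lam ^ 2 := by
    intro θ
    set x : ℝ := -(lam * f θ) with hxdef
    have hx : |x| ≤ 1 := by
      rw [hxdef, abs_neg, abs_mul, abs_of_nonneg hl0]
      calc lam * |f θ| ≤ 1 * 1 :=
            mul_le_mul hl1 (hf θ) (abs_nonneg _) zero_le_one
        _ = 1 := one_mul 1
    have h := (abs_le.mp (Real.exp_bound hx (n := 2) (by norm_num))).2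
    have hsum : ∑ i ∈ range 2, x ^ i / (Nat.factorial i : ℝ) = 1 + x := by
      norm_num [Finset.sum_range_succ, Nat.factorial]
    rw [hsum] at h
    have hx2 : x ^ 2 ≤ lam ^ 2 := by
      have : |x| ^ 2 ≤ 1 ^ 2 := by
        apply pow_le_pow_left₀ (abs_nonneg _) hx
      have habs : x ^ 2 = |x| ^ 2 := (sq_abs x).symm
      have hxl : |x| ≤ lam := by
        rw [hxdef, abs_neg, abs_mul, abs_of_nonneg hl0]
        calc lam * |f θ| ≤ lam * 1 := mul_le_mul_of_nonneg_left (hf θ) hl0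
          _ = lam := mul_one lam
      calc x ^ 2 = |x| ^ 2 := habs
        _ ≤ lam ^ 2 := pow_le_pow_left₀ (abs_nonneg _) hxl 2
    have hfac : ((2:ℕ).succ : ℝ) / ((Nat.factorial 2 : ℕ) * 2 : ℝ) ≤ 1 := by
      norm_num [Nat.factorial]
    nlinarith [abs_nonneg x, sq_abs x, sq_nonneg x]
  have expand : ∀ θ, p θ * (1 + (-(lam * f θ)) + lam ^ 2)
      = (p θ + lam ^ 2 * p θ) - lam * (p θ * f θ) := by intro θ; ring
  calc ∑ θ, p θ * Real.exp (-(lam * f θ))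
      ≤ ∑ θ, p θ * (1 + (-(lam * f θ)) + lam ^ 2) :=
        Finset.sum_le_sum fun θ _ => mul_le_mul_of_nonneg_left (pt θ) (hp0 θ)
    _ = (1 + lam ^ 2 * 1) - lam * ∑ θ, p θ * f θ := by
        simp_rw [expand]
        rw [Finset.sum_sub_distrib, Finset.sum_add_distrib, ← Finset.mul_sum, ← Finset.mul_sum,
          hp1]
    _ ≤ 1 + lam ^ 2 := by nlinarith
    _ ≤ Real.exp (lam ^ 2) := by
        have := Real.add_one_le_exp (lam ^ 2)
        linarith

/-- State-wise decomposition for relaxed majority voting: if `q ≥ 32·log(4/(η·δ))/ε²`, every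
posterior `p*` decomposes into `q`-uniform posteriors so that, for every state `θ`,
`Σ_p γ_p · p_θ · W_δ(b^{p,ε}) ≥ (1−η) · p*_θ · W(b^{p*})`. -/
theorem statewise_decomposition_majority {Θ R : Type*} [Fintype Θ] [Fintype R] [DecidableEq R]
    (u : R → Θ → ℝ) (hu : ∀ r θ, u r θ ∈ Set.Icc (-1 : ℝ) 1)
    (δ ε η : ℝ) (hδ : δ ∈ Set.Ioo (0 : ℝ) 1) (hε : 0 < ε) (hη : η ∈ Set.Ioc (0 : ℝ) 1)
    (q : ℕ) (hq : 0 < q) (hq2 : 32 * Real.log (4 / (η * δ)) / ε ^ 2 ≤ q)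
    (pstar : Θ → ℝ) (hps0 : ∀ θ, 0 ≤ pstar θ) (hps1 : ∑ θ, pstar θ = 1) :
    ∃ (S : Finset (Θ → ℝ)) (γ : (Θ → ℝ) → ℝ),
      (∀ p ∈ S, (∀ θ, 0 ≤ p θ) ∧ (∑ θ, p θ = 1) ∧ (∀ θ, ∃ n : ℕ, p θ = (n : ℝ) / q)) ∧
      (∀ p ∈ S, 0 ≤ γ p) ∧ (∑ p ∈ S, γ p = 1) ∧
      (∀ θ, ∑ p ∈ S, γ p * p θ = pstar θ) ∧
      (∀ θ, (1 - η) * pstar θ * W (bestResp u 0 pstar) ≤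
        ∑ p ∈ S, γ p * p θ * Wrel δ (bestResp u ε p)) := by
  classical
  set w : (Fin q → Θ) → ℝ := fun ω => ∏ j, pstar (ω j) with hwdef
  set emp : (Fin q → Θ) → Θ → ℝ :=
    fun ω θ => ((univ.filter (fun i => ω i = θ)).card : ℝ) / q with hempdef
  have hq0 : (0:ℝ) < q := by exact_mod_cast hq
  have hw0 : ∀ ω, 0 ≤ w ω := fun ω => Finset.prod_nonneg fun j _ => hps0 _
  have hwsum : ∑ ω : Fin q → Θ, w ω = 1 := by
    rw [hwdef, sum_prod_pow pstar, hps1, one_pow]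
  have hfiber : ∀ F : (Θ → ℝ) → ℝ,
      ∑ p ∈ Finset.image emp univ, (∑ ω ∈ univ.filter (fun ω => emp ω = p), w ω) * F p
        = ∑ ω : Fin q → Θ, w ω * F (emp ω) := by
    intro F
    rw [← Finset.sum_fiberwise_of_maps_to
      (fun ω _ => Finset.mem_image_of_mem emp (Finset.mem_univ ω)) (fun ω => w ω * F (emp ω))]
    refine Finset.sum_congr rfl fun p hp => ?_
    rw [Finset.sum_mul]
    refine Finset.sum_congr rfl fun ω hω => ?_
    rw [(Finset.mem_filter.mp hω).2]
  have hcnt : ∀ ω : Fin q → Θ, ∑ θ' : Θ, ((univ.filter (fun i => ω i = θ')).card : ℝ) = q := by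
    intro ω
    rw [← Nat.cast_sum]
    norm_cast
    rw [← Finset.card_eq_sum_card_fiberwise (fun i (_ : i ∈ univ) => Finset.mem_univ (ω i))]
    simp
  have hemp0 : ∀ ω θ', 0 ≤ emp ω θ' := fun ω θ' => div_nonneg (Nat.cast_nonneg _) hq0.le
  have hemp1 : ∀ ω, ∑ θ', emp ω θ' = 1 := by
    intro ω
    rw [hempdef]
    simp only
    rw [← Finset.sum_div, hcnt ω, div_self hq0.ne']
  have hempsum : ∀ (θ : Θ) (ω : Fin q → Θ),
      emp ω θ = (∑ i : Fin q, if ω i = θ then (1:ℝ) else 0) / q := by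
    intro θ ω
    rw [hempdef]
    simp only
    congr 1
    rw [Finset.card_filter]
    push_cast
    rfl
  have hmarg : ∀ (θ : Θ) (i : Fin q),
      ∑ ω : Fin q → Θ, (if ω i = θ then (1:ℝ) else 0) * w ω = pstar θ := by
    intro θ i
    rw [hwdef]
    rw [sum_cond_prod i θ pstar, hps1, one_pow, mul_one]
  have hMean : ∀ θ, ∑ ω : Fin q → Θ, w ω * emp ω θ = pstar θ := by
    intro θ
    have hterm : ∀ ω : Fin q → Θ, w ω * emp ω θ
        = (∑ i : Fin q, (if ω i = θ then (1:ℝ) else 0) * w ω) / q := by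
      intro ω
      rw [hempsum θ ω, mul_comm, div_mul_eq_mul_div, Finset.sum_mul]
    simp_rw [hterm]
    rw [← Finset.sum_div, Finset.sum_comm]
    simp_rw [hmarg θ]
    rw [Finset.sum_const, card_univ, Fintype.card_fin, nsmul_eq_mul]
    field_simp
  refine ⟨Finset.image emp univ, fun p => ∑ ω ∈ univ.filter (fun ω => emp ω = p), w ω,
    ?_, ?_, ?_, ?_, ?_⟩
  · rintro p hp
    obtain ⟨ω, -, rfl⟩ := Finset.mem_image.mp hp
    exact ⟨fun θ => hemp0 ω θ, hemp1 ω, fun θ => ⟨(univ.filter (fun i => ω i = θ)).card, rfl⟩⟩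
  · intro p hp
    exact Finset.sum_nonneg fun ω _ => hw0 ω
  · have := hfiber (fun _ => 1)
    simpa [hwsum] using this
  · intro θ
    have := hfiber (fun p => p θ)
    simpa [hMean θ] using this
  · intro θ
    have h5 : ∑ p ∈ Finset.image emp univ,
        (∑ ω ∈ univ.filter (fun ω => emp ω = p), w ω) * p θ * Wrel δ (bestResp u ε p)
        = ∑ ω : Fin q → Θ, w ω * (emp ω θ * Wrel δ (bestResp u ε (emp ω))) := by
      rw [← hfiber (fun p => p θ * Wrel δ (bestResp u ε p))]
      exact Finset.sum_congr rfl fun p _ => (mul_assoc _ _ _)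
    rw [h5]
    have hWrelnn : ∀ c : R → Bool, 0 ≤ Wrel δ c := by
      intro c; unfold Wrel; split <;> norm_num
    by_cases hW : majThreshold R ≤ votesFor (bestResp u 0 pstar)
    swap
    · unfold W; rw [if_neg hW, mul_zero]
      exact Finset.sum_nonneg fun ω _ =>
        mul_nonneg (hw0 ω) (mul_nonneg (hemp0 ω θ) (hWrelnn _))
    unfold W
    rw [if_pos hW, mul_one]
    have hAllGood : (∀ ω : Fin q → Θ, Wrel δ (bestResp u ε (emp ω)) = 1) →
        (1 - η) * pstar θ ≤ ∑ ω : Fin q → Θ, w ω * (emp ω θ * Wrel δ (bestResp u ε (emp ω))) := by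
      intro hall
      have : ∑ ω : Fin q → Θ, w ω * (emp ω θ * Wrel δ (bestResp u ε (emp ω))) = pstar θ := by
        rw [← hMean θ]
        exact Finset.sum_congr rfl fun ω _ => by rw [hall ω, mul_one]
      rw [this]
      nlinarith [hps0 θ, hη.1]
    by_cases hε1 : 1 ≤ ε
    · apply hAllGood
      intro ω
      have hallvote : ∀ r, bestResp u ε (emp ω) r = true := by
        intro r
        unfold bestResp
        rw [if_pos]
        have hlow : (-1:ℝ) ≤ ∑ θ', emp ω θ' * u r θ' := by
          have h1 : ∀ θ' ∈ (univ : Finset Θ), -(emp ω θ') ≤ emp ω θ' * u r θ' := by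
            intro θ' _
            have := mul_le_mul_of_nonneg_left (hu r θ').1 (hemp0 ω θ')
            linarith [this]
          have h2 := Finset.sum_le_sum h1
          have h3 : ∑ θ', -(emp ω θ') = -1 := by
            rw [Finset.sum_neg_distrib, hemp1 ω]
          linarith
        linarith
      unfold Wrel
      rw [if_pos]
      have hvf : votesFor (bestResp u ε (emp ω)) = Fintype.card R := by
        unfold votesFor
        rw [Finset.filter_true_of_mem (fun r _ => hallvote r), card_univ]
      rw [hvf]
      have hmt : majThreshold R ≤ Fintype.card R := by
        unfold majThreshold
        rw [Nat.ceil_le]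
        have : (0:ℝ) ≤ (Fintype.card R : ℝ) := Nat.cast_nonneg _
        linarith
      refine le_trans (Nat.ceil_le.mpr ?_) hmt
      have h0T : (0:ℝ) ≤ (majThreshold R : ℝ) := Nat.cast_nonneg _
      nlinarith [hδ.1]
    push_neg at hε1
    by_cases hT : majThreshold R = 0
    · apply hAllGood
      intro ω
      unfold Wrel
      rw [if_pos]
      rw [hT]
      simp
    have hTpos : 0 < majThreshold R := Nat.pos_of_ne_zero hT
    -- main probabilistic case
    have hempdot : ∀ (ω : Fin q → Θ) (g : Θ → ℝ),
        ∑ θ', emp ω θ' * g θ' = (∑ j, g (ω j)) / q := by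
      intro ω g
      have hkey : ∑ j, g (ω j)
          = ∑ θ' : Θ, ((univ.filter (fun i => ω i = θ')).card : ℝ) * g θ' := by
        rw [← Finset.sum_fiberwise_of_maps_to (g := ω)
          (fun j (_ : j ∈ univ) => Finset.mem_univ (ω j)) (fun j => g (ω j))]
        refine Finset.sum_congr rfl fun θ' _ => ?_
        have hc : ∑ j ∈ univ.filter (fun j => ω j = θ'), g (ω j)
            = ∑ j ∈ univ.filter (fun j => ω j = θ'), g θ' :=
          Finset.sum_congr rfl fun j hj => by rw [(Finset.mem_filter.mp hj).2]
        rw [hc, Finset.sum_const, nsmul_eq_mul]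
      rw [hkey, Finset.sum_div]
      refine Finset.sum_congr rfl fun θ' _ => ?_
      rw [hempdef]
      simp only
      rw [div_mul_eq_mul_div]
    have hδ0 := hδ.1
    have hδ1 := hδ.2
    have hη0 := hη.1
    have hη1 := hη.2
    have hηδ0 : 0 < η * δ := mul_pos hη0 hδ0
    have hηδ1 : η * δ ≤ 1 := by nlinarith
    have hlog4 : (1:ℝ) ≤ Real.log 4 := by
      rw [Real.le_log_iff_exp_le (by norm_num)]
      calc Real.exp 1 ≤ 2.7182818286 := Real.exp_one_lt_d9.le
        _ ≤ 4 := by norm_num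
    have hlogηδ : Real.log (η * δ) ≤ 0 := Real.log_nonpos hηδ0.le hηδ1
    have hLdef : Real.log (4 / (η * δ)) = Real.log 4 - Real.log (η * δ) :=
      Real.log_div (by norm_num) hηδ0.ne'
    have hq32 : 32 * Real.log (4 / (η * δ)) ≤ q * ε ^ 2 := by
      rw [div_le_iff₀ (pow_pos hε 2)] at hq2
      linarith
    have hTr : (0:ℝ) < (majThreshold R : ℝ) := by exact_mod_cast hTpos
    have hδT : (0:ℝ) < δ * (majThreshold R : ℝ) := mul_pos hδ0 hTr
    obtain ⟨V, hVsub, hVcard⟩ := Finset.exists_subset_card_eq hW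
    have hVmean : ∀ r ∈ V, 0 ≤ ∑ θ', pstar θ' * u r θ' := by
      intro r hr
      have hmem := (Finset.mem_filter.mp (hVsub hr)).2
      by_cases hc : -(0:ℝ) ≤ ∑ θ', pstar θ' * u r θ'
      · linarith [hc]
      · exfalso
        unfold bestResp at hmem
        rw [if_neg hc] at hmem
        exact Bool.false_ne_true hmem
    have hbadiff : ∀ (p' : Θ → ℝ) (r : R),
        bestResp u ε p' r = false ↔ ∑ θ', p' θ' * u r θ' < -ε := by
      intro p' r
      unfold bestResp
      constructor
      · intro h
        by_contra hge
        push_neg at hge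
        rw [if_pos hge] at h
        simp at h
      · intro h
        rw [if_neg (not_le.mpr h)]
    set badR : (Fin q → Θ) → ℕ :=
      fun ω => (V.filter (fun r => bestResp u ε (emp ω) r = false)).card with hbadRdef
    have hGb : ∀ ω : Fin q → Θ, 1 - Wrel δ (bestResp u ε (emp ω))
        ≤ (badR ω : ℝ) / (δ * (majThreshold R : ℝ)) := by
      intro ω
      unfold Wrel
      split_ifs with h
      · have h0 : (0:ℝ) ≤ (badR ω : ℝ) / (δ * (majThreshold R : ℝ)) :=
          div_nonneg (Nat.cast_nonneg _) hδT.le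
        linarith
      · rw [sub_zero, le_div_iff₀ hδT, one_mul]
        by_contra hcon
        push_neg at hcon
        apply h
        rw [Nat.ceil_le]
        have hsplit : (V.filter (fun r => bestResp u ε (emp ω) r = true)).card + badR ω
            = majThreshold R := by
          rw [← hVcard, hbadRdef]
          simp only
          rw [← Finset.card_filter_add_card_filter_not
            (s := V) (p := fun r => bestResp u ε (emp ω) r = true)]
          congr 2
          ext r
          simp [Bool.not_eq_true]
        have hsub2 : (V.filter (fun r => bestResp u ε (emp ω) r = true)).card
            ≤ votesFor (bestResp u ε (emp ω)) :=
          Finset.card_le_card (Finset.filter_subset_filter _ (Finset.subset_univ V))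
        have e1 : ((V.filter (fun r => bestResp u ε (emp ω) r = true)).card : ℝ)
            = (majThreshold R : ℝ) - (badR ω : ℝ) := by
          have := congrArg (Nat.cast : ℕ → ℝ) hsplit
          push_cast at this
          linarith
        have e2 : ((V.filter (fun r => bestResp u ε (emp ω) r = true)).card : ℝ)
            ≤ (votesFor (bestResp u ε (emp ω)) : ℝ) := by exact_mod_cast hsub2
        have hexpand : (1 - δ) * (majThreshold R : ℝ)
            = (majThreshold R : ℝ) - δ * (majThreshold R : ℝ) := by ring
        linarith
    have hfabs : ∀ (r : R) (θ' : Θ), |u r θ'| ≤ 1 := fun r θ' =>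
      abs_le.mpr ⟨(hu r θ').1, (hu r θ').2⟩
    set lam : ℝ := ε / 2 with hlamdef
    have hlam0 : 0 < lam := half_pos hε
    have hlam1 : lam ≤ 1 := by rw [hlamdef]; linarith
    have hKey : ∀ (i : Fin q), ∀ r ∈ V,
        ∑ ω : Fin q → Θ, w ω * ((if ω i = θ then (1:ℝ) else 0) *
          (if bestResp u ε (emp ω) r = false then (1:ℝ) else 0))
        ≤ η * δ * pstar θ := by
      intro i r hr
      set G : Θ → ℝ := fun x => pstar x * Real.exp (-(lam * u r x)) with hGdef
      have hG0 : ∀ x, 0 ≤ G x := fun x => mul_nonneg (hps0 x) (Real.exp_nonneg _)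
      have hstep1 : ∀ ω : Fin q → Θ,
          w ω * ((if ω i = θ then (1:ℝ) else 0) *
            (if bestResp u ε (emp ω) r = false then (1:ℝ) else 0))
          ≤ Real.exp (-(lam * (q * ε))) * ((if ω i = θ then (1:ℝ) else 0) * ∏ j, G (ω j)) := by
        intro ω
        have hite0 : (0:ℝ) ≤ (if ω i = θ then (1:ℝ) else 0) := by split <;> norm_num
        have hprod0 : 0 ≤ ∏ j, G (ω j) := Finset.prod_nonneg fun j _ => hG0 _
        by_cases hb : bestResp u ε (emp ω) r = false
        · rw [if_pos hb, mul_one]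
          have hbad : ∑ j, u r (ω j) < -(q * ε) := by
            have h1 := (hbadiff (emp ω) r).mp hb
            have h2 : ∑ θ', emp ω θ' * u r θ' = (∑ j, u r (ω j)) / q := hempdot ω (u r)
            rw [h2, div_lt_iff₀ hq0] at h1
            nlinarith [h1]
          have hexp1 : (1:ℝ) ≤ Real.exp (lam * (-(q * ε) - ∑ j, u r (ω j))) := by
            apply Real.one_le_exp
            have hd : (0:ℝ) ≤ -(q * ε) - ∑ j, u r (ω j) := by linarith
            positivity
          have hfact : w ω * Real.exp (lam * (-(q * ε) - ∑ j, u r (ω j)))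
              = Real.exp (-(lam * (q * ε))) * ∏ j, G (ω j) := by
            have harg : lam * (-(q * ε) - ∑ j, u r (ω j))
                = -(lam * (q * ε)) + ∑ j : Fin q, -(lam * u r (ω j)) := by
              rw [Finset.sum_neg_distrib, ← Finset.mul_sum]; ring
            rw [harg, Real.exp_add, hGdef]
            simp only
            rw [Finset.prod_mul_distrib, ← Real.exp_sum]
            rw [hwdef]
            ring
          calc w ω * (if ω i = θ then (1:ℝ) else 0)
              ≤ w ω * Real.exp (lam * (-(q * ε) - ∑ j, u r (ω j)))
                  * (if ω i = θ then (1:ℝ) else 0) := by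
                by_cases hi : ω i = θ
                · rw [if_pos hi, mul_one, mul_one]
                  nlinarith [hw0 ω, hexp1]
                · rw [if_neg hi, mul_zero, mul_zero]
            _ = Real.exp (-(lam * (q * ε))) * ((if ω i = θ then (1:ℝ) else 0) * ∏ j, G (ω j)) := by
                rw [hfact]; ring
        · rw [if_neg hb, mul_zero, mul_zero]
          positivity
      have hstep2 : ∑ ω : Fin q → Θ, Real.exp (-(lam * (q * ε))) *
          ((if ω i = θ then (1:ℝ) else 0) * ∏ j, G (ω j))
          = Real.exp (-(lam * (q * ε))) * (G θ * (∑ x, G x) ^ (q - 1)) := by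
        rw [← Finset.mul_sum, sum_cond_prod i θ G, Fintype.card_fin]
      have hGθ : G θ ≤ pstar θ * Real.exp lam := by
        rw [hGdef]
        simp only
        apply mul_le_mul_of_nonneg_left _ (hps0 θ)
        apply Real.exp_le_exp.mpr
        nlinarith [(hu r θ).1, hlam0.le]
      have hGsum : ∑ x, G x ≤ Real.exp (lam ^ 2) :=
        mgf_step pstar (u r) lam hps0 hps1 (hfabs r) (hVmean r hr) hlam0.le hlam1
      have hGsum0 : 0 ≤ ∑ x, G x := Finset.sum_nonneg fun x _ => hG0 x
      have hpow : (∑ x, G x) ^ (q - 1) ≤ Real.exp (lam ^ 2) ^ (q - 1) :=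
        pow_le_pow_left₀ hGsum0 hGsum _
      have hexpow : Real.exp (lam ^ 2) ^ (q - 1) ≤ Real.exp (q * lam ^ 2) := by
        rw [← Real.exp_nat_mul]
        apply Real.exp_le_exp.mpr
        have hcst : ((q - 1 : ℕ) : ℝ) ≤ (q : ℝ) := by exact_mod_cast Nat.sub_le q 1
        nlinarith [sq_nonneg lam]
      have hfinal : Real.exp (-(lam * (q * ε))) *
          (pstar θ * Real.exp lam * Real.exp ((q:ℝ) * lam ^ 2)) ≤ η * δ * pstar θ := by
        have hcollect : Real.exp (-(lam * (q * ε))) *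
            (pstar θ * Real.exp lam * Real.exp ((q:ℝ) * lam ^ 2))
            = pstar θ * Real.exp (-(lam * (q * ε)) + lam + (q:ℝ) * lam ^ 2) := by
          rw [Real.exp_add, Real.exp_add]; ring
        rw [hcollect]
        have hexple : -(lam * ((q:ℝ) * ε)) + lam + (q:ℝ) * lam ^ 2 ≤ Real.log (η * δ) := by
          rw [hlamdef]
          have expand : -((ε/2) * ((q:ℝ) * ε)) + ε/2 + (q:ℝ) * (ε/2) ^ 2
              = -((q:ℝ) * ε ^ 2)/4 + ε/2 := by ring
          rw [expand]
          rw [hLdef] at hq32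
          linarith
        calc pstar θ * Real.exp (-(lam * ((q:ℝ) * ε)) + lam + (q:ℝ) * lam ^ 2)
            ≤ pstar θ * Real.exp (Real.log (η * δ)) :=
              mul_le_mul_of_nonneg_left (Real.exp_le_exp.mpr hexple) (hps0 θ)
          _ = pstar θ * (η * δ) := by rw [Real.exp_log hηδ0]
          _ = η * δ * pstar θ := by ring
      calc ∑ ω : Fin q → Θ, w ω * ((if ω i = θ then (1:ℝ) else 0) *
            (if bestResp u ε (emp ω) r = false then (1:ℝ) else 0))
          ≤ ∑ ω : Fin q → Θ, Real.exp (-(lam * (q * ε))) *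
            ((if ω i = θ then (1:ℝ) else 0) * ∏ j, G (ω j)) :=
            Finset.sum_le_sum fun ω _ => hstep1 ω
        _ = Real.exp (-(lam * (q * ε))) * (G θ * (∑ x, G x) ^ (q - 1)) := hstep2
        _ ≤ Real.exp (-(lam * (q * ε))) *
            (pstar θ * Real.exp lam * Real.exp ((q:ℝ) * lam ^ 2)) := by
            apply mul_le_mul_of_nonneg_left _ (Real.exp_nonneg _)
            have h1 : G θ * (∑ x, G x) ^ (q - 1)
                ≤ (pstar θ * Real.exp lam) * Real.exp ((q:ℝ) * lam ^ 2) :=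
              mul_le_mul hGθ (le_trans hpow hexpow) (pow_nonneg hGsum0 _) (mul_nonneg (hps0 θ) (Real.exp_nonneg _))
            linarith
        _ ≤ η * δ * pstar θ := hfinal
    have hbadcast : ∀ ω : Fin q → Θ, (badR ω : ℝ)
        = ∑ r ∈ V, (if bestResp u ε (emp ω) r = false then (1:ℝ) else 0) := by
      intro ω
      rw [hbadRdef]
      simp only
      rw [Finset.card_filter]
      push_cast
      rfl
    have hterm2 : ∀ ω : Fin q → Θ,
        w ω * (emp ω θ * ((badR ω : ℝ) / (δ * (majThreshold R : ℝ))))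
        = (1 / ((q : ℝ) * (δ * (majThreshold R : ℝ)))) * ∑ i : Fin q, ∑ r ∈ V,
            w ω * ((if ω i = θ then (1:ℝ) else 0) *
              (if bestResp u ε (emp ω) r = false then (1:ℝ) else 0)) := by
      intro ω
      have h1 : ∑ i : Fin q, ∑ r ∈ V, w ω * ((if ω i = θ then (1:ℝ) else 0) *
            (if bestResp u ε (emp ω) r = false then (1:ℝ) else 0))
          = w ω * ∑ i : Fin q, ∑ r ∈ V, ((if ω i = θ then (1:ℝ) else 0) *
            (if bestResp u ε (emp ω) r = false then (1:ℝ) else 0)) := by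
        rw [Finset.mul_sum]
        exact Finset.sum_congr rfl fun i _ => (Finset.mul_sum _ _ _).symm
      rw [h1, hempsum θ ω, hbadcast ω, div_mul_div_comm, Finset.sum_mul_sum]
      ring
    have hB : ∑ ω : Fin q → Θ, w ω * (emp ω θ * (1 - Wrel δ (bestResp u ε (emp ω))))
        ≤ η * pstar θ := by
      calc ∑ ω : Fin q → Θ, w ω * (emp ω θ * (1 - Wrel δ (bestResp u ε (emp ω))))
          ≤ ∑ ω : Fin q → Θ, w ω * (emp ω θ * ((badR ω : ℝ) / (δ * (majThreshold R : ℝ)))) :=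
            Finset.sum_le_sum fun ω _ =>
              mul_le_mul_of_nonneg_left
                (mul_le_mul_of_nonneg_left (hGb ω) (hemp0 ω θ)) (hw0 ω)
        _ = (1 / ((q : ℝ) * (δ * (majThreshold R : ℝ)))) * ∑ ω : Fin q → Θ,
              ∑ i : Fin q, ∑ r ∈ V, w ω * ((if ω i = θ then (1:ℝ) else 0) *
                (if bestResp u ε (emp ω) r = false then (1:ℝ) else 0)) := by
            simp_rw [hterm2]
            rw [Finset.mul_sum]
        _ = (1 / ((q : ℝ) * (δ * (majThreshold R : ℝ)))) * ∑ i : Fin q,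
              ∑ r ∈ V, ∑ ω : Fin q → Θ, w ω * ((if ω i = θ then (1:ℝ) else 0) *
                (if bestResp u ε (emp ω) r = false then (1:ℝ) else 0)) := by
            congr 1
            rw [Finset.sum_comm]
            exact Finset.sum_congr rfl fun i _ => Finset.sum_comm
        _ ≤ (1 / ((q : ℝ) * (δ * (majThreshold R : ℝ)))) * ∑ i : Fin q,
              ∑ r ∈ V, (η * δ * pstar θ) := by
            apply mul_le_mul_of_nonneg_left _ (by positivity)
            exact Finset.sum_le_sum fun i _ => Finset.sum_le_sum fun r hr => hKey i r hr
        _ = η * pstar θ := by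
            simp only [Finset.sum_const, hVcard, Finset.card_univ, Fintype.card_fin,
              nsmul_eq_mul]
            field_simp
    have hA : ∑ ω : Fin q → Θ, w ω * (emp ω θ * Wrel δ (bestResp u ε (emp ω)))
        = pstar θ - ∑ ω : Fin q → Θ, w ω * (emp ω θ * (1 - Wrel δ (bestResp u ε (emp ω)))) := by
      rw [eq_sub_iff_add_eq, ← Finset.sum_add_distrib, ← hMean θ]
      exact Finset.sum_congr rfl fun ω _ => by ring
    rw [hA]
    nlinarith [hB, hps0 θ]
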